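/- arXiv:1801.02152 — 2 statements merged into one kernel-verified Lean document; each statement's English description precedes it below -/
import Mathlib

section
/- Let m ≥ 1 and let B be an m×m matrix over F₂. If the digital net generated by (I, B, B²) is a (0,m,3)-net over F₂, then B³ = I. -/
open Matrix

/-- The vector of binary digits of `l` (least significant first). -/
def digitsVec (m l : ℕ) : Fin m → ZMod 2 := fun k => if l.testBit k.val then 1 else 0

/-- The map φ sending a bit vector to a real number in [0,1). -/
noncomputable def phiMap (m : ℕ) (y : Fin m → ZMod 2) : ℝ :=
  ∑ k : Fin m, ((y k).val : ℝ) / 2 ^ (k.val + 1)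

/-- The digital net (as a multiset of `2^m` points in `[0,1)^s`) generated by
matrices `C 0, …, C (s-1)`. -/
noncomputable def digitalNet (m s : ℕ) (C : Fin s → Matrix (Fin m) (Fin m) (ZMod 2)) :
    Multiset (Fin s → ℝ) :=
  (Multiset.range (2 ^ m)).map fun l => fun j => phiMap m ((C j).mulVec (digitsVec m l))

open Classical in
/-- `P` is a `(t,m,s)`-net over `F₂`: every elementary interval of volume `2^{t-m}`
contains exactly `2^t` points of `P`, counted with multiplicity. -/
def IsNet (t m s : ℕ) (P : Multiset (Fin s → ℝ)) : Prop :=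
  ∀ d : Fin s → ℕ, (∑ i, d i) = m - t →
    ∀ a : Fin s → ℕ, (∀ i, a i < 2 ^ d i) →
      (P.countP fun x => ∀ i,
        ((a i : ℝ) / 2 ^ d i ≤ x i ∧ x i < ((a i : ℝ) + 1) / 2 ^ d i)) = 2 ^ t

/-- The anti-diagonal matrix `J_m` over `F₂`. -/
def Jmat (m : ℕ) : Matrix (Fin m) (Fin m) (ZMod 2) :=
  Matrix.of fun i j => if i.val + j.val = m - 1 then 1 else 0

/-- The upper-triangular Pascal matrix `P_m` over `F₂` (0-indexed entry `(i,j)` is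
`binom(j,i) mod 2`). -/
def Pmat (m : ℕ) : Matrix (Fin m) (Fin m) (ZMod 2) :=
  Matrix.of fun i j => ((j.val.choose i.val : ℕ) : ZMod 2)

/-- A matrix is lower triangular. -/
def IsLowerTri {m : ℕ} (L : Matrix (Fin m) (Fin m) (ZMod 2)) : Prop :=
  ∀ i j : Fin m, i < j → L i j = 0

/-!
Write `V_d` for the vectors in `F₂^m` whose first `d` coordinates vanish. The net property implies
that `V_a ∩ B⁻¹ V_b ∩ B⁻² V_c = 0` whenever `a + b + c = m`, so by counting dimensions
this space is a line when `a + b + c = m - 1`. By induction on `c`, `T = B³` preserves `V_c`: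
on `V_c` the `c`-th coordinates of `x` and `T x` agree, because they agree on the nonzero vectors
of the lines `V_c ∩ B⁻¹ V_a ∩ B⁻² V_{m-1-c-a}`, and these vectors span `V_c` (their images under
`B` are triangular). Hence `T` maps each of these lines to itself and, over `F₂`, fixes it
pointwise; the lines `V_a ∩ B⁻¹ V_{m-1-a}` span `F₂^m`, so `T = I`.
-/

section TailSpace

variable (K : Type*) [Field K] (m : ℕ)

/-- `V_d`: the vectors whose coordinates of index `< d` vanish. -/
def tailSpace (d : ℕ) : Submodule K (Fin m → K) :=
  LinearMap.ker (LinearMap.funLeft K K (Subtype.val : {i : Fin m // (i : ℕ) < d} → Fin m))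

variable {K m}

theorem mem_tailSpace {d : ℕ} {x : Fin m → K} :
    x ∈ tailSpace K m d ↔ ∀ i : Fin m, (i : ℕ) < d → x i = 0 := by
  simp [tailSpace, funext_iff]

theorem tailSpace_zero : tailSpace K m 0 = ⊤ :=
  eq_top_iff.2 fun _ _ => mem_tailSpace.2 fun _ hi => absurd hi (Nat.not_lt_zero _)

theorem tailSpace_eq_bot {d : ℕ} (hd : m ≤ d) : tailSpace K m d = ⊥ :=
  eq_bot_iff.2 fun _ hx => funext fun i => mem_tailSpace.1 hx i (i.2.trans_le hd)

theorem mem_tailSpace_succ {d : ℕ} (hd : d < m) {x : Fin m → K} :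
    x ∈ tailSpace K m (d + 1) ↔ x ∈ tailSpace K m d ∧ x ⟨d, hd⟩ = 0 := by
  simp only [mem_tailSpace]
  refine ⟨fun h => ⟨fun i hi => h i (by omega), h _ (Nat.lt_succ_self d)⟩, ?_⟩
  rintro ⟨h, hd0⟩ i hi
  rcases (Nat.lt_succ_iff_lt_or_eq.1 hi) with hi | hi
  · exact h i hi
  · exact (congrArg x (Fin.ext hi)).trans hd0

theorem sup_comap_tailSpace_eq_top {M : Type*} [AddCommGroup M] [Module K M]
    (S : Submodule K M) (L : M →ₗ[K] Fin m → K) {n : ℕ} (hn : n ≤ m)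
    (hS : ∀ a (ha : a < n), ∃ u ∈ S, L u ∈ tailSpace K m a ∧ L u ⟨a, ha.trans_le hn⟩ ≠ 0) :
    S ⊔ (tailSpace K m n).comap L = ⊤ := by
  induction n with
  | zero => rw [tailSpace_zero, Submodule.comap_top, sup_top_eq]
  | succ n ih =>
    have hnm : n < m := hn
    obtain ⟨u, huS, huTail, hu⟩ := hS n (Nat.lt_succ_self n)
    have hstep : (tailSpace K m n).comap L ≤ S ⊔ (tailSpace K m (n + 1)).comap L := by
      intro y hy
      set t := L y ⟨n, hnm⟩ / L u ⟨n, hnm⟩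
      refine Submodule.mem_sup.2 ⟨t • u, S.smul_mem t huS, y - t • u, ?_, add_sub_cancel _ _⟩
      rw [Submodule.mem_comap, mem_tailSpace_succ hnm, map_sub, map_smul]
      refine ⟨sub_mem hy (Submodule.smul_mem _ t huTail), ?_⟩
      simp [t, hu]
    rw [eq_top_iff, ← ih (by omega) fun a ha => hS a (by omega)]
    exact sup_le le_sup_left (hstep.trans (sup_le le_sup_left le_sup_right))

/-- `⋂ⱼ Cⱼ⁻¹ V_{dⱼ}`. -/
def netKernel {s : ℕ} (C : Fin s → Matrix (Fin m) (Fin m) K) (d : Fin s → ℕ) :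
    Submodule K (Fin m → K) :=
  ⨅ j, (tailSpace K m (d j)).comap (toLin' (C j))

theorem netKernel_ne_bot {s : ℕ} (C : Fin s → Matrix (Fin m) (Fin m) K) {d : Fin s → ℕ}
    (hd : ∑ j, d j < m) : netKernel C d ≠ ⊥ := by
  have hker : netKernel C d = LinearMap.ker (LinearMap.pi fun j =>
      (LinearMap.funLeft K K (Subtype.val : {i : Fin m // (i : ℕ) < d j} → Fin m)).comp
        (toLin' (C j))) := by
    rw [LinearMap.ker_pi]
    rfl
  have hcard (j : Fin s) : Fintype.card {i : Fin m // (i : ℕ) < d j} ≤ d j :=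
    (Fintype.card_le_of_injective (fun i => (⟨i.1, i.2⟩ : Fin (d j)))
      fun _ _ h => by simpa [Fin.ext_iff, Subtype.ext_iff] using h).trans_eq (Fintype.card_fin _)
  rw [hker]
  refine LinearMap.ker_ne_bot_of_finrank_lt ?_
  rw [Module.finrank_pi_fintype, Module.finrank_fin_fun]
  simp only [Module.finrank_fintype_fun_eq_card]
  exact (Finset.sum_le_sum fun j _ => hcard j).trans_lt hd

end TailSpace

section DigitalNet

variable {m : ℕ}

theorem phiMap_nonneg (y : Fin m → ZMod 2) : 0 ≤ phiMap m y :=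
  Finset.sum_nonneg fun _ _ => by positivity

theorem sum_Ico_half_pow_succ_lt {d : ℕ} (hd : d ≤ m) :
    ∑ k ∈ Finset.Ico d m, (1 / 2 : ℝ) ^ (k + 1) < (1 / 2) ^ d := by
  have hgeom : (((1 / 2 : ℝ) ^ m - (1 / 2) ^ d) / (1 / 2 - 1)) * (1 / 2) =
      (1 / 2) ^ d - (1 / 2) ^ m := by ring
  simp_rw [pow_succ, ← Finset.sum_mul]
  rw [geom_sum_Ico (by norm_num) hd, hgeom]
  exact sub_lt_self _ (by positivity)

theorem phiMap_lt_of_mem_tailSpace {d : ℕ} (hd : d ≤ m) {y : Fin m → ZMod 2}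
    (hy : y ∈ tailSpace (ZMod 2) m d) : phiMap m y < 1 / 2 ^ d := by
  have hterm (k : Fin m) : ((y k).val : ℝ) / 2 ^ ((k : ℕ) + 1) ≤
      if d ≤ (k : ℕ) then (1 / 2 : ℝ) ^ ((k : ℕ) + 1) else 0 := by
    split_ifs with hk
    · rw [div_eq_mul_one_div, _root_.one_div_pow]
      have : ((y k).val : ℝ) ≤ 1 := by exact_mod_cast Nat.le_of_lt_succ (ZMod.val_lt (y k))
      exact mul_le_of_le_one_left (by positivity) this
    · simp [mem_tailSpace.1 hy k (not_le.1 hk)]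
  calc phiMap m y
      ≤ ∑ k : Fin m, if d ≤ (k : ℕ) then (1 / 2 : ℝ) ^ ((k : ℕ) + 1) else 0 :=
        Finset.sum_le_sum fun k _ => hterm k
    _ = ∑ k ∈ Finset.Ico d m, (1 / 2 : ℝ) ^ (k + 1) := by
        rw [Fin.sum_univ_eq_sum_range (fun k => if d ≤ k then (1 / 2 : ℝ) ^ (k + 1) else 0),
          ← Finset.sum_range_add_sum_Ico _ hd, Finset.sum_eq_zero fun k hk => if_neg
            (not_le.2 (Finset.mem_range.1 hk)), zero_add]
        exact Finset.sum_congr rfl fun k hk => if_pos (Finset.mem_Ico.1 hk).1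
    _ < (1 / 2) ^ d := sum_Ico_half_pow_succ_lt hd
    _ = 1 / 2 ^ d := _root_.one_div_pow 2 d

theorem exists_digitsVec_eq (x : Fin m → ZMod 2) : ∃ l < 2 ^ m, digitsVec m l = x := by
  let x' : Fin m → Fin 2 := x
  refine ⟨finFunctionFinEquiv x', (finFunctionFinEquiv x').isLt, funext fun i => ?_⟩
  have hdigit := finFunctionFinEquiv_symm_apply_val (finFunctionFinEquiv x') i
  rw [Equiv.symm_apply_apply] at hdigit
  simp only [digitsVec, Nat.testBit_eq_decide_div_mod_eq, ← hdigit]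
  change _ = x' i
  generalize x' i = b
  fin_cases b <;> rfl

theorem digitsVec_zero : digitsVec m 0 = 0 :=
  funext fun _ => by simp [digitsVec]

theorem netKernel_eq_bot_of_isNet {s : ℕ} {C : Fin s → Matrix (Fin m) (Fin m) (ZMod 2)}
    (hnet : IsNet 0 m s (digitalNet m s C)) {d : Fin s → ℕ} (hd : ∑ j, d j = m) :
    netKernel C d = ⊥ := by
  refine eq_bot_iff.2 fun x hx => ?_
  obtain ⟨l, hl, rfl⟩ := exists_digitsVec_eq x
  have hdm (j : Fin s) : d j ≤ m := hd ▸ Finset.single_le_sum (fun _ _ => Nat.zero_le _)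
    (Finset.mem_univ j)
  have hbox := hnet d (by rw [hd, Nat.sub_zero]) (fun _ => 0) fun _ => Nat.two_pow_pos _
  simp only [digitalNet, Multiset.countP_map, Nat.cast_zero, zero_div, zero_add, pow_zero] at hbox
  change (Multiset.filter _ (Finset.range (2 ^ m)).val).card = 1 at hbox
  rw [← Finset.filter_val, Finset.card_val] at hbox
  -- the box `∏ⱼ [0, 2^{-dⱼ})` holds exactly one point, yet contains those of indices `l` and `0`
  have hl0 : l = 0 := Finset.card_le_one.1 hbox.le _
    (Finset.mem_filter.2 ⟨Finset.mem_range.2 hl, fun j =>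
      ⟨phiMap_nonneg _, phiMap_lt_of_mem_tailSpace (hdm j) (Submodule.mem_iInf _ |>.1 hx j)⟩⟩)
    _ (Finset.mem_filter.2 ⟨Finset.mem_range.2 (Nat.two_pow_pos m), fun j => by
      simp [digitsVec_zero, phiMap]⟩)
  rw [hl0, digitsVec_zero]
  rfl

end DigitalNet

section PowThree

variable {K : Type*} [Field K] {m : ℕ}

theorem mem_netKernel_triple {B : Matrix (Fin m) (Fin m) K} {a b c : ℕ} {x : Fin m → K} :
    x ∈ netKernel ![1, B, B ^ 2] ![a, b, c] ↔
      x ∈ tailSpace K m a ∧ B *ᵥ x ∈ tailSpace K m b ∧ B ^ 2 *ᵥ x ∈ tailSpace K m c := by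
  simp [netKernel, Fin.forall_fin_succ]

theorem exists_ne_zero_mem_netKernel_triple (B : Matrix (Fin m) (Fin m) K) {a b c : ℕ}
    (h : a + b + c < m) : ∃ x ∈ netKernel ![1, B, B ^ 2] ![a, b, c], x ≠ 0 :=
  (Submodule.ne_bot_iff _).1 (netKernel_ne_bot _ (by simpa [Fin.sum_univ_three] using h))

variable {B : Matrix (Fin m) (Fin m) (ZMod 2)}
  (hB : ∀ a b c : ℕ, a + b + c = m → netKernel ![1, B, B ^ 2] ![a, b, c] = ⊥)
include hB

theorem apply_ne_zero_of_mem_netKernel_triple {a b c : ℕ} (h : a + b + c + 1 = m)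
    {x : Fin m → ZMod 2} (hx : x ∈ netKernel ![1, B, B ^ 2] ![a, b, c]) (hx0 : x ≠ 0) :
    x ⟨a, by omega⟩ ≠ 0 ∧ (B *ᵥ x) ⟨b, by omega⟩ ≠ 0 ∧ (B ^ 2 *ᵥ x) ⟨c, by omega⟩ ≠ 0 := by
  obtain ⟨hxa, hxb, hxc⟩ := mem_netKernel_triple.1 hx
  have hzero {a' b' c' : ℕ} (h' : a' + b' + c' = m)
      (hx' : x ∈ netKernel ![1, B, B ^ 2] ![a', b', c']) : False := by
    rw [hB a' b' c' h'] at hx'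
    exact hx0 hx'
  refine ⟨fun h0 => ?_, fun h0 => ?_, fun h0 => ?_⟩
  · exact hzero (a' := a + 1) (by omega)
      (mem_netKernel_triple.2 ⟨(mem_tailSpace_succ _).2 ⟨hxa, h0⟩, hxb, hxc⟩)
  · exact hzero (b' := b + 1) (by omega)
      (mem_netKernel_triple.2 ⟨hxa, (mem_tailSpace_succ _).2 ⟨hxb, h0⟩, hxc⟩)
  · exact hzero (c' := c + 1) (by omega)
      (mem_netKernel_triple.2 ⟨hxa, hxb, (mem_tailSpace_succ _).2 ⟨hxc, h0⟩⟩)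

theorem apply_eq_pow_three_mulVec_apply {c : ℕ} (hc : c < m)
    (hT : ∀ x ∈ tailSpace (ZMod 2) m c, B ^ 3 *ᵥ x ∈ tailSpace (ZMod 2) m c)
    {x : Fin m → ZMod 2} (hx : x ∈ tailSpace (ZMod 2) m c) :
    x ⟨c, hc⟩ = (B ^ 3 *ᵥ x) ⟨c, hc⟩ := by
  let S : Submodule (ZMod 2) (Fin m → ZMod 2) := tailSpace (ZMod 2) m c ⊓
    LinearMap.eqLocus (LinearMap.proj ⟨c, hc⟩) ((LinearMap.proj ⟨c, hc⟩).comp (toLin' (B ^ 3)))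
  have hspan : S ⊔ (tailSpace (ZMod 2) m (m - c)).comap (toLin' B) = ⊤ := by
    refine sup_comap_tailSpace_eq_top S (toLin' B) (Nat.sub_le m c) fun a ha => ?_
    obtain ⟨u, hu, hu0⟩ :=
      exists_ne_zero_mem_netKernel_triple B (a := c) (b := a) (c := m - 1 - c - a) (by omega)
    obtain ⟨huc, hua, -⟩ := apply_ne_zero_of_mem_netKernel_triple hB (by omega) hu hu0
    obtain ⟨hu_c, hu_a, hu_e⟩ := mem_netKernel_triple.1 hu
    -- `B u` lies on a line of the same kind, which forces `(B³ u)_c ≠ 0`; in `F₂` then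
    -- `u_c = 1 = (B³ u)_c`
    have hBu : B *ᵥ u ∈ netKernel ![1, B, B ^ 2] ![a, m - 1 - c - a, c] := by
      refine mem_netKernel_triple.2 ⟨hu_a, ?_, ?_⟩
      · rwa [mulVec_mulVec, ← sq]
      · rw [mulVec_mulVec, ← pow_succ]
        exact hT u hu_c
    have hBu0 : B *ᵥ u ≠ 0 := fun h => hua (by rw [h]; rfl)
    obtain ⟨-, -, hTu⟩ := apply_ne_zero_of_mem_netKernel_triple hB (by omega) hBu hBu0
    rw [mulVec_mulVec, ← pow_succ] at hTu
    exact ⟨u, ⟨hu_c, (Fin.eq_one_of_ne_zero _ huc).trans (Fin.eq_one_of_ne_zero _ hTu).symm⟩,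
      hu_a, hua⟩
  obtain ⟨s, hs, z, hz, rfl⟩ := Submodule.mem_sup.1 (hspan ▸ Submodule.mem_top (x := x))
  have hz0 : z = 0 := by
    have hzc : z ∈ tailSpace (ZMod 2) m c := by
      simpa using sub_mem hx hs.1
    have hzW : z ∈ netKernel ![1, B, B ^ 2] ![c, m - c, 0] :=
      mem_netKernel_triple.2 ⟨hzc, hz, by rw [tailSpace_zero]; exact Submodule.mem_top⟩
    rwa [hB _ _ _ (by omega)] at hzW
  rw [hz0, add_zero]
  exact hs.2

theorem pow_three_mulVec_mem_tailSpace_iff (c : ℕ) {x : Fin m → ZMod 2} :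
    B ^ 3 *ᵥ x ∈ tailSpace (ZMod 2) m c ↔ x ∈ tailSpace (ZMod 2) m c := by
  induction c generalizing x with
  | zero => simp [tailSpace_zero]
  | succ c ih =>
    by_cases hc : c < m
    · have hkey {y : Fin m → ZMod 2} (hy : y ∈ tailSpace (ZMod 2) m c) :=
        apply_eq_pow_three_mulVec_apply hB hc (fun z hz => ih.2 hz) hy
      rw [mem_tailSpace_succ hc, mem_tailSpace_succ hc]
      constructor
      · rintro ⟨hTx, h0⟩
        exact ⟨ih.1 hTx, (hkey (ih.1 hTx)).trans h0⟩
      · rintro ⟨hx, h0⟩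
        exact ⟨ih.2 hx, (hkey hx).symm.trans h0⟩
    · rw [tailSpace_eq_bot (by omega : m ≤ c + 1), ← tailSpace_eq_bot (not_lt.1 hc)]
      exact ih

theorem pow_three_mulVec_eq_self {a b c : ℕ} (h : a + b + c + 1 = m) {x : Fin m → ZMod 2}
    (hx : x ∈ netKernel ![1, B, B ^ 2] ![a, b, c]) : B ^ 3 *ᵥ x = x := by
  obtain ⟨hxa, hxb, hxc⟩ := mem_netKernel_triple.1 hx
  have hTx : B ^ 3 *ᵥ x ∈ netKernel ![1, B, B ^ 2] ![a, b, c] := by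
    refine mem_netKernel_triple.2 ⟨(pow_three_mulVec_mem_tailSpace_iff hB a).2 hxa, ?_, ?_⟩
    · rw [mulVec_mulVec, ← pow_succ', pow_succ, ← mulVec_mulVec]
      exact (pow_three_mulVec_mem_tailSpace_iff hB b).2 hxb
    · rw [mulVec_mulVec, ← pow_add, add_comm, pow_add, ← mulVec_mulVec]
      exact (pow_three_mulVec_mem_tailSpace_iff hB c).2 hxc
  by_cases hx0 : x = 0
  · simp [hx0]
  have hTx0 : B ^ 3 *ᵥ x ≠ 0 := fun h0 => by
    have := (pow_three_mulVec_mem_tailSpace_iff hB m (x := x)).1 (h0 ▸ zero_mem _)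
    rw [tailSpace_eq_bot le_rfl] at this
    exact hx0 this
  have hxa0 := (apply_ne_zero_of_mem_netKernel_triple hB h hx hx0).1
  have hTxa0 := (apply_ne_zero_of_mem_netKernel_triple hB h hTx hTx0).1
  have hdiff : B ^ 3 *ᵥ x - x ∈ netKernel ![1, B, B ^ 2] ![a + 1, b, c] := by
    obtain ⟨hda, hdb, hdc⟩ := mem_netKernel_triple.1 (sub_mem hTx hx)
    refine mem_netKernel_triple.2 ⟨(mem_tailSpace_succ (by omega)).2 ⟨hda, ?_⟩, hdb, hdc⟩
    rw [Pi.sub_apply, sub_eq_zero]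
    exact (Fin.eq_one_of_ne_zero _ hTxa0).trans (Fin.eq_one_of_ne_zero _ hxa0).symm
  rw [hB _ _ _ (by omega)] at hdiff
  exact sub_eq_zero.1 hdiff

theorem pow_three_eq_one : B ^ 3 = 1 := by
  let S : Submodule (ZMod 2) (Fin m → ZMod 2) := LinearMap.eqLocus (toLin' (B ^ 3)) LinearMap.id
  have hfix : S ⊔ (tailSpace (ZMod 2) m m).comap LinearMap.id = ⊤ := by
    refine sup_comap_tailSpace_eq_top S LinearMap.id le_rfl fun a ha => ?_
    obtain ⟨u, hu, hu0⟩ :=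
      exists_ne_zero_mem_netKernel_triple B (a := a) (b := m - 1 - a) (c := 0) (by omega)
    refine ⟨u, ?_, (mem_netKernel_triple.1 hu).1,
      (apply_ne_zero_of_mem_netKernel_triple hB (by omega) hu hu0).1⟩
    rw [LinearMap.mem_eqLocus, toLin'_apply, LinearMap.id_apply]
    exact pow_three_mulVec_eq_self hB (by omega) hu
  rw [tailSpace_eq_bot le_rfl, Submodule.comap_bot, LinearMap.ker_id, sup_bot_eq,
    LinearMap.eqLocus_eq_top] at hfix
  exact toLin'.injective (by rw [hfix, toLin'_one])

end PowThree

theorem stmt1_general (m : ℕ) (B : Matrix (Fin m) (Fin m) (ZMod 2))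
    (hnet : IsNet 0 m 3 (digitalNet m 3 ![1, B, B ^ 2])) :
    B ^ 3 = 1 :=
  pow_three_eq_one fun a b c h =>
    netKernel_eq_bot_of_isNet hnet (by simpa [Fin.sum_univ_three] using h)

theorem stmt1 (m : ℕ) (hm : 1 ≤ m) (B : Matrix (Fin m) (Fin m) (ZMod 2))
    (hnet : IsNet 0 m 3 (digitalNet m 3 ![1, B, B ^ 2])) :
    B ^ 3 = 1 :=
  stmt1_general m B hnet
end

section
/- Let m ≥ 1 and let B be an m×m matrix over F₂. Then the digital net generated by (I, B) is a (0,m,2)-net over F₂ if and only if there exist nonsingular lower-triangular m×m matrices L_1, L_2 over F₂ such that B = L_1·J_m·L_2. -/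
open Matrix

/-!
The point of the net with index vector `v ∈ F₂^m` lies in the elementary box of shape `(d₁, d₂)`
and position `(a₁, a₂)` exactly when the first `dᵢ` binary digits of `v` resp. `B v` spell `aᵢ`.
There are as many boxes of a given shape as points, so the net property says that the linear maps
`v ↦ (first d₁ digits of v, first d₂ digits of B v)`, `d₁ + d₂ = m`, are injective. Writing
`v = J w`, this is the nonsingularity of every leading principal submatrix of `B J`, which is the
classical criterion for an LU decomposition `B J = L U`; then `B = L J (J U J)` with `J U J` lower
triangular.
-/

open Finset

lemma card_fiber_eq_one_iff_injective {α β : Type*} [Fintype α] [DecidableEq β] {f : α → β}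
    {s : Finset β} (hf : ∀ a, f a ∈ s) (hcard : #s = Fintype.card α) :
    (∀ b ∈ s, #{a | f a = b} = 1) ↔ Function.Injective f := by
  constructor
  · intro h a a' haa'
    exact card_le_one.mp (h _ (hf a)).le a (by simp) a' (by simp [haa'])
  · intro hf_inj b hb
    have himage : univ.image f = s :=
      eq_of_subset_of_card_le (fun b hb => by obtain ⟨a, -, rfl⟩ := mem_image.mp hb; exact hf a)
        (by rw [hcard, card_image_of_injective _ hf_inj, card_univ])
    obtain ⟨a, -, rfl⟩ := mem_image.mp (himage ▸ hb)
    exact card_eq_one.mpr ⟨a, by ext a'; simp [hf_inj.eq_iff]⟩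

section LeadingSubmatrix

variable {R K : Type*} {m : ℕ}

def leadingSubmatrix (A : Matrix (Fin m) (Fin m) R) (k : ℕ) (hk : k ≤ m) :
    Matrix (Fin k) (Fin k) R :=
  A.submatrix (Fin.castLE hk) (Fin.castLE hk)

lemma extend_castLE_of_le [Zero R] {k : ℕ} (hk : k ≤ m) (u : Fin k → R) {j : Fin m}
    (hj : k ≤ j) : Function.extend (Fin.castLE hk) u 0 j = 0 :=
  Function.extend_apply' _ _ _ fun ⟨t, ht⟩ => by
    have := t.isLt
    rw [← ht, Fin.val_castLE] at hj
    omega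

lemma mulVec_extend_castLE [NonUnitalNonAssocSemiring R] (A : Matrix (Fin m) (Fin m) R) {k : ℕ}
    (hk : k ≤ m) (u : Fin k → R) (i : Fin k) :
    (A *ᵥ Function.extend (Fin.castLE hk) u 0) (Fin.castLE hk i) =
      (leadingSubmatrix A k hk *ᵥ u) i :=
  (Fintype.sum_of_injective _ (Fin.castLE_injective hk) _ _
    (fun j hj => by rw [Function.extend_apply' _ _ _ hj, Pi.zero_apply, mul_zero])
    (fun t => by rw [(Fin.castLE_injective hk).extend_apply]; rfl)).symm

lemma vecMul_extend_castLE [NonUnitalNonAssocSemiring R] (A : Matrix (Fin m) (Fin m) R) {k : ℕ}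
    (hk : k ≤ m) (u : Fin k → R) (j : Fin k) :
    (Function.extend (Fin.castLE hk) u 0 ᵥ* A) (Fin.castLE hk j) =
      (u ᵥ* leadingSubmatrix A k hk) j :=
  (Fintype.sum_of_injective _ (Fin.castLE_injective hk) _ _
    (fun i hi => by rw [Function.extend_apply' _ _ _ hi, Pi.zero_apply, zero_mul])
    (fun t => by rw [(Fin.castLE_injective hk).extend_apply]; rfl)).symm

lemma leadingSubmatrix_mul_of_isLowerTriangular [NonUnitalNonAssocSemiring R]
    {L : Matrix (Fin m) (Fin m) R} (hL : L.IsLowerTriangular) (M : Matrix (Fin m) (Fin m) R)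
    {k : ℕ} (hk : k ≤ m) :
    leadingSubmatrix (L * M) k hk = leadingSubmatrix L k hk * leadingSubmatrix M k hk := by
  ext i j
  refine (Fintype.sum_of_injective _ (Fin.castLE_injective hk) _ _ (fun t ht => ?_)
    fun t => rfl).symm
  have hit : Fin.castLE hk i < t := by
    by_contra! h
    exact ht ⟨⟨t, by have := i.isLt; simp only [Fin.le_def, Fin.val_castLE] at h; omega⟩, rfl⟩
  exact mul_eq_zero_of_left (hL hit) _

variable [CommRing R] [IsDomain R]

lemma det_leadingSubmatrix_ne_zero_iff (A : Matrix (Fin m) (Fin m) R) {k : ℕ} (hk : k ≤ m) :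
    (leadingSubmatrix A k hk).det ≠ 0 ↔
      ∀ w : Fin m → R, (∀ j : Fin m, k ≤ j → w j = 0) →
        (∀ i : Fin m, i < k → (A *ᵥ w) i = 0) → w = 0 := by
  constructor
  · intro hdet w hw hAw
    have hext : Function.extend (Fin.castLE hk) (w ∘ Fin.castLE hk) 0 = w := by
      funext j
      by_cases hj : k ≤ j
      · rw [extend_castLE_of_le hk _ hj, hw j hj]
      · obtain ⟨t, rfl⟩ : ∃ t : Fin k, Fin.castLE hk t = j := ⟨⟨j, by omega⟩, rfl⟩
        exact (Fin.castLE_injective hk).extend_apply _ _ t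
    have hu : leadingSubmatrix A k hk *ᵥ (w ∘ Fin.castLE hk) = 0 := funext fun i => by
      rw [← mulVec_extend_castLE, hext]; exact hAw _ i.isLt
    rw [← hext, eq_zero_of_mulVec_eq_zero hdet hu, Function.extend_zero]
  · intro hker hdet
    obtain ⟨u, hu0, hu⟩ := exists_mulVec_eq_zero_iff.mpr hdet
    refine hu0 (funext fun t => ?_)
    have hw := hker _ (fun j hj => extend_castLE_of_le hk u hj) fun i hi => by
      obtain ⟨t, rfl⟩ : ∃ t : Fin k, Fin.castLE hk t = i := ⟨⟨i, hi⟩, rfl⟩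
      rw [mulVec_extend_castLE, hu, Pi.zero_apply]
    rw [← (Fin.castLE_injective hk).extend_apply u 0 t, congrFun hw _]
    rfl

lemma det_leadingSubmatrix_ne_zero_of_isUpperTriangular {U : Matrix (Fin m) (Fin m) R}
    (hU : U.IsUpperTriangular) (hdet : U.det ≠ 0) {k : ℕ} (hk : k ≤ m) :
    (leadingSubmatrix U k hk).det ≠ 0 := by
  have hUk : (leadingSubmatrix U k hk).IsUpperTriangular := fun _ _ h => hU h
  rw [det_of_isUpperTriangular hU, prod_ne_zero_iff] at hdet
  rw [det_of_isUpperTriangular hUk, prod_ne_zero_iff]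
  exact fun i _ => hdet _ (mem_univ _)

lemma det_leadingSubmatrix_ne_zero_of_isLowerTriangular {L : Matrix (Fin m) (Fin m) R}
    (hL : L.IsLowerTriangular) (hdet : L.det ≠ 0) {k : ℕ} (hk : k ≤ m) :
    (leadingSubmatrix L k hk).det ≠ 0 := by
  have hLk : (leadingSubmatrix L k hk).IsLowerTriangular := fun _ _ h => hL h
  rw [det_of_isLowerTriangular _ hL, prod_ne_zero_iff] at hdet
  rw [det_of_isLowerTriangular _ hLk, prod_ne_zero_iff]
  exact fun i _ => hdet _ (mem_univ _)

variable [Field K]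

lemma exists_vecMul_eq_neg_row (A : Matrix (Fin m) (Fin m) K) (i : Fin m)
    (hA : (leadingSubmatrix A i i.isLt.le).det ≠ 0) :
    ∃ x : Fin m → K, (∀ t, i ≤ t → x t = 0) ∧ ∀ j, j < i → (x ᵥ* A) j = -A i j := by
  set r : Fin i → K := fun j => A i (Fin.castLE i.isLt.le j)
  refine ⟨Function.extend (Fin.castLE i.isLt.le)
    (-(r ᵥ* (leadingSubmatrix A i i.isLt.le)⁻¹)) 0,
    fun t ht => extend_castLE_of_le _ _ ht, fun j hj => ?_⟩
  obtain ⟨t, rfl⟩ : ∃ t : Fin i, Fin.castLE i.isLt.le t = j := ⟨⟨j, hj⟩, rfl⟩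
  rw [vecMul_extend_castLE, neg_vecMul, vecMul_vecMul, nonsing_inv_mul _ hA.isUnit, vecMul_one]
  rfl

theorem forall_det_leadingSubmatrix_ne_zero_iff_exists_lower_mul_upper
    (A : Matrix (Fin m) (Fin m) K) :
    (∀ k (hk : k ≤ m), (leadingSubmatrix A k hk).det ≠ 0) ↔
      ∃ L U : Matrix (Fin m) (Fin m) K, L.IsLowerTriangular ∧ IsUnit L ∧
        U.IsUpperTriangular ∧ IsUnit U ∧ A = L * U := by
  constructor
  · intro hA
    -- Each row of a unit lower-triangular `M` with `M * A` upper triangular is found on its own,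
    -- by solving a linear system whose matrix is a leading principal submatrix of `A`.
    choose X hXsupp hX using fun i : Fin m => exists_vecMul_eq_neg_row A i (hA i _)
    set M : Matrix (Fin m) (Fin m) K := 1 + Matrix.of X
    have hM : M.IsLowerTriangular := fun i j (hij : i < j) => by
      simp [M, hXsupp i j hij.le, one_apply_ne hij.ne]
    have hMdet : M.det = 1 := by
      rw [det_of_isLowerTriangular _ hM]
      exact prod_eq_one fun i _ => by simp [M, hXsupp i i le_rfl]
    have hMA : (M * A).IsUpperTriangular := fun i j hji => by
      rw [add_mul, one_mul, Matrix.add_apply]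
      exact add_eq_zero_iff_eq_neg'.mpr (hX i j hji)
    have hMu : IsUnit M.det := hMdet ▸ isUnit_one
    have := M.invertibleOfIsUnitDet hMu
    refine ⟨M⁻¹, M * A, blockTriangular_inv_of_blockTriangular hM,
      (isUnit_iff_isUnit_det _).mpr (isUnit_nonsing_inv_det _ hMu), hMA, ?_,
      by rw [← Matrix.mul_assoc, nonsing_inv_mul _ hMu, Matrix.one_mul]⟩
    rw [isUnit_iff_isUnit_det, det_mul, hMdet, one_mul]
    simpa [leadingSubmatrix] using (hA m le_rfl).isUnit
  · rintro ⟨L, U, hL, hLu, hU, hUu, rfl⟩ k hk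
    rw [leadingSubmatrix_mul_of_isLowerTriangular hL, det_mul]
    exact mul_ne_zero
      (det_leadingSubmatrix_ne_zero_of_isLowerTriangular hL
        ((isUnit_iff_isUnit_det L).mp hLu).ne_zero hk)
      (det_leadingSubmatrix_ne_zero_of_isUpperTriangular hU
        ((isUnit_iff_isUnit_det U).mp hUu).ne_zero hk)

end LeadingSubmatrix

section BinaryDigits

variable {m : ℕ}

def bitAt (y : Fin m → ZMod 2) (k : ℕ) : ℕ := if h : k < m then (y ⟨k, h⟩).val else 0

def prefixNat (y : Fin m → ZMod 2) : ℕ → ℕ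
  | 0 => 0
  | d + 1 => 2 * prefixNat y d + bitAt y d

lemma bitAt_le_one (y : Fin m → ZMod 2) (k : ℕ) : bitAt y k ≤ 1 := by
  unfold bitAt
  split
  · exact Nat.le_of_lt_succ (ZMod.val_lt _)
  · exact zero_le_one

lemma prefixNat_lt (y : Fin m → ZMod 2) (d : ℕ) : prefixNat y d < 2 ^ d := by
  induction d with
  | zero => simp [prefixNat]
  | succ d ih => have := bitAt_le_one y d; rw [prefixNat, pow_succ]; omega

lemma prefixNat_add_div (y : Fin m → ZMod 2) (d e : ℕ) :
    prefixNat y (d + e) / 2 ^ e = prefixNat y d := by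
  induction e with
  | zero => simp
  | succ e ih =>
    have := bitAt_le_one y (d + e)
    rw [← add_assoc, prefixNat, pow_succ', ← Nat.div_div_eq_div_mul, ← ih]
    congr 1
    omega

lemma prefixNat_eq_prefixNat_iff {y z : Fin m → ZMod 2} {d : ℕ} (hd : d ≤ m) :
    prefixNat y d = prefixNat z d ↔ ∀ k : Fin m, (k : ℕ) < d → y k = z k := by
  induction d with
  | zero => simp [prefixNat]
  | succ d ih =>
    have hy := bitAt_le_one y d
    have hz := bitAt_le_one z d
    have hbit : bitAt y d = bitAt z d ↔ y ⟨d, hd⟩ = z ⟨d, hd⟩ := by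
      simp only [bitAt, dif_pos (show d < m from hd)]; exact (ZMod.val_injective 2).eq_iff
    have hsplit : (∀ k : Fin m, (k : ℕ) < d + 1 → y k = z k) ↔
        (∀ k : Fin m, (k : ℕ) < d → y k = z k) ∧ y ⟨d, hd⟩ = z ⟨d, hd⟩ := by
      refine ⟨fun h => ⟨fun k hk => h k (by omega), h _ (by simp)⟩, fun ⟨h, hlast⟩ k hk => ?_⟩
      rcases Nat.lt_succ_iff_lt_or_eq.mp hk with hk | hk
      · exact h k hk
      · obtain rfl : k = ⟨d, hd⟩ := Fin.ext hk
        exact hlast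
    rw [prefixNat, prefixNat, hsplit, ← ih (by omega), ← hbit]
    omega

lemma sum_bitAt_div (y : Fin m → ZMod 2) (d : ℕ) :
    ∑ k ∈ range d, (bitAt y k : ℝ) / 2 ^ (k + 1) = prefixNat y d / 2 ^ d := by
  induction d with
  | zero => simp [prefixNat]
  | succ d ih =>
    rw [sum_range_succ, ih, prefixNat]
    push_cast
    field_simp
    ring

lemma phiMap_eq_prefixNat (y : Fin m → ZMod 2) : phiMap m y = prefixNat y m / 2 ^ m := by
  rw [← sum_bitAt_div, ← Fin.sum_univ_eq_sum_range (fun k => (bitAt y k : ℝ) / 2 ^ (k + 1))]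
  refine sum_congr rfl fun k _ => ?_
  simp [bitAt]

lemma phiMap_mem_Ico_iff (y : Fin m → ZMod 2) {d : ℕ} (hd : d ≤ m) (a : ℕ) :
    ((a : ℝ) / 2 ^ d ≤ phiMap m y ∧ phiMap m y < ((a : ℝ) + 1) / 2 ^ d) ↔ prefixNat y d = a := by
  obtain ⟨e, rfl⟩ := Nat.exists_eq_add_of_le hd
  have hscale (b : ℝ) : b / 2 ^ d = b * 2 ^ e / 2 ^ (d + e) := by
    rw [pow_add]; field_simp
  rw [phiMap_eq_prefixNat, ← prefixNat_add_div y d e, hscale, hscale,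
    div_le_div_iff_of_pos_right (by positivity), div_lt_div_iff_of_pos_right (by positivity)]
  have key : a * 2 ^ e ≤ prefixNat y (d + e) ∧ prefixNat y (d + e) < (a + 1) * 2 ^ e ↔
      prefixNat y (d + e) / 2 ^ e = a := by
    rw [← Nat.le_div_iff_mul_le (by positivity), ← Nat.div_lt_iff_lt_mul (by positivity)]
    omega
  exact_mod_cast key

end BinaryDigits

section DigitalNets

variable {m : ℕ}

lemma digitsVec_injOn : Set.InjOn (digitsVec m) (Set.Iio (2 ^ m)) := by
  intro l hl l' hl' h
  refine Nat.eq_of_testBit_eq fun k => ?_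
  by_cases hk : k < m
  · have := congrFun h ⟨k, hk⟩
    simp only [digitsVec] at this
    revert this
    cases l.testBit k <;> cases l'.testBit k <;> decide
  · have h2 : 2 ^ m ≤ 2 ^ k := Nat.pow_le_pow_right two_pos (not_lt.mp hk)
    rw [Nat.testBit_lt_two_pow (lt_of_lt_of_le hl h2),
      Nat.testBit_lt_two_pow (lt_of_lt_of_le hl' h2)]

lemma map_digitsVec_range : (Multiset.range (2 ^ m)).map (digitsVec m) = univ.val := by
  have hinj : Set.InjOn (digitsVec m) (range (2 ^ m)) := by
    simpa only [coe_range] using digitsVec_injOn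
  rw [← range_val, ← image_val_of_injOn hinj]
  congr 1
  refine eq_univ_of_card _ ?_
  rw [card_image_of_injOn hinj, card_range]
  simp

lemma countP_digitalNet {s : ℕ} (C : Fin s → Matrix (Fin m) (Fin m) (ZMod 2))
    (p : (Fin s → ℝ) → Prop) [DecidablePred p] :
    (digitalNet m s C).countP p = #{v | p fun j => phiMap m (C j *ᵥ v)} := by
  have hnet : digitalNet m s C =
      ((Multiset.range (2 ^ m)).map (digitsVec m)).map fun v j => phiMap m (C j *ᵥ v) := by
    rw [Multiset.map_map]; rfl
  rw [hnet, map_digitsVec_range, Multiset.countP_map, card_def, filter_val]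

theorem isNet_zero_digitalNet_iff {s : ℕ} (C : Fin s → Matrix (Fin m) (Fin m) (ZMod 2)) :
    IsNet 0 m s (digitalNet m s C) ↔ ∀ d : Fin s → ℕ, ∑ i, d i = m →
      ∀ u : Fin m → ZMod 2, (∀ i (k : Fin m), (k : ℕ) < d i → (C i *ᵥ u) k = 0) → u = 0 := by
  classical
  refine forall_congr' fun d => ?_
  rw [Nat.sub_zero]
  refine forall_congr' fun hd => ?_
  have hdm (i : Fin s) : d i ≤ m := hd ▸ single_le_sum (fun _ _ => Nat.zero_le _) (mem_univ i)
  set Φ : (Fin m → ZMod 2) → Fin s → ℕ := fun v i => prefixNat (C i *ᵥ v) (d i)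
  have hcount (a : Fin s → ℕ) : (digitalNet m s C).countP (fun x => ∀ i,
      ((a i : ℝ) / 2 ^ d i ≤ x i ∧ x i < ((a i : ℝ) + 1) / 2 ^ d i)) = #{v | Φ v = a} := by
    rw [countP_digitalNet]
    simp only [phiMap_mem_Ico_iff _ (hdm _), funext_iff, Φ]
  have hΦ (v w : Fin m → ZMod 2) :
      Φ v = Φ w ↔ ∀ i (k : Fin m), (k : ℕ) < d i → (C i *ᵥ (v - w)) k = 0 := by
    simp only [Φ, funext_iff, prefixNat_eq_prefixNat_iff (hdm _), mulVec_sub, Pi.sub_apply,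
      sub_eq_zero]
  have hbox : #(Fintype.piFinset fun i => range (2 ^ d i)) = Fintype.card (Fin m → ZMod 2) := by
    simp [prod_pow_eq_pow_sum, hd]
  have hmem (v : Fin m → ZMod 2) : Φ v ∈ Fintype.piFinset fun i => range (2 ^ d i) :=
    Fintype.mem_piFinset.mpr fun i => mem_range.mpr (prefixNat_lt _ _)
  simp only [hcount, pow_zero]
  calc (∀ a : Fin s → ℕ, (∀ i, a i < 2 ^ d i) → #{v | Φ v = a} = 1)
      ↔ ∀ a ∈ Fintype.piFinset fun i => range (2 ^ d i), #{v | Φ v = a} = 1 := by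
        simp only [Fintype.mem_piFinset, mem_range]
    _ ↔ Function.Injective Φ := card_fiber_eq_one_iff_injective hmem hbox
    _ ↔ _ := ⟨fun hinj u hu => hinj ((hΦ u 0).mpr (by simpa using hu)),
        fun hker v w h => sub_eq_zero.mp (hker _ ((hΦ v w).mp h))⟩

end DigitalNets

section Antidiagonal

variable {m : ℕ}

lemma Jmat_eq_toMatrix : Jmat m = (Fin.revPerm : Equiv.Perm (Fin m)).toPEquiv.toMatrix := by
  ext i j
  simp only [Jmat, of_apply, PEquiv.toMatrix_apply, Equiv.toPEquiv_apply, Option.mem_def,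
    Option.some.injEq, Fin.revPerm_apply, Fin.ext_iff, Fin.val_rev]
  congr 1
  apply propext
  omega

lemma Jmat_mul (M : Matrix (Fin m) (Fin m) (ZMod 2)) : Jmat m * M = M.submatrix Fin.rev id := by
  rw [Jmat_eq_toMatrix, PEquiv.toMatrix_toPEquiv_mul]; rfl

lemma mul_Jmat (M : Matrix (Fin m) (Fin m) (ZMod 2)) : M * Jmat m = M.submatrix id Fin.rev := by
  rw [Jmat_eq_toMatrix, PEquiv.mul_toMatrix_toPEquiv, Fin.revPerm_symm]; rfl

lemma Jmat_mulVec (v : Fin m → ZMod 2) : Jmat m *ᵥ v = v ∘ Fin.rev := by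
  rw [Jmat_eq_toMatrix, PEquiv.toMatrix_toPEquiv_mulVec]; rfl

lemma Jmat_mul_Jmat : Jmat m * Jmat m = 1 := by
  rw [Jmat_mul, ← Matrix.one_mul (Jmat m), mul_Jmat, submatrix_submatrix]
  ext i j
  simp [one_apply]

lemma isUnit_Jmat : IsUnit (Jmat m) := ⟨⟨_, _, Jmat_mul_Jmat, Jmat_mul_Jmat⟩, rfl⟩

lemma Jmat_mulVec_Jmat_mulVec (v : Fin m → ZMod 2) : Jmat m *ᵥ (Jmat m *ᵥ v) = v := by
  rw [mulVec_mulVec, Jmat_mul_Jmat, one_mulVec]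

lemma isUpperTriangular_Jmat_mul_mul_Jmat_iff (L : Matrix (Fin m) (Fin m) (ZMod 2)) :
    (Jmat m * L * Jmat m).IsUpperTriangular ↔ L.IsLowerTriangular := by
  rw [Jmat_mul, mul_Jmat, submatrix_submatrix]
  refine ⟨fun h i j (hij : i < j) => ?_, fun h i j (hji : j < i) => h (Fin.rev_lt_rev.mpr hji)⟩
  simpa using @h i.rev j.rev (Fin.rev_lt_rev.mpr hij)

lemma isLowerTri_iff (L : Matrix (Fin m) (Fin m) (ZMod 2)) : IsLowerTri L ↔ L.IsLowerTriangular :=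
  ⟨fun h _ _ hij => h _ _ hij, fun h _ _ hij => h hij⟩

lemma exists_lower_mul_upper_iff_exists_lower_mul_Jmat_mul_lower
    (B : Matrix (Fin m) (Fin m) (ZMod 2)) :
    (∃ L U : Matrix (Fin m) (Fin m) (ZMod 2), L.IsLowerTriangular ∧ IsUnit L ∧
        U.IsUpperTriangular ∧ IsUnit U ∧ B * Jmat m = L * U) ↔
      ∃ L₁ L₂ : Matrix (Fin m) (Fin m) (ZMod 2), IsLowerTri L₁ ∧ IsUnit L₁ ∧ IsLowerTri L₂ ∧
        IsUnit L₂ ∧ B = L₁ * Jmat m * L₂ := by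
  have hconj (M : Matrix (Fin m) (Fin m) (ZMod 2)) :
      Jmat m * (Jmat m * M * Jmat m) * Jmat m = M := by
    simp only [← Matrix.mul_assoc, Jmat_mul_Jmat, Matrix.one_mul]
    rw [Matrix.mul_assoc, Jmat_mul_Jmat, Matrix.mul_one]
  have hunit {M : Matrix (Fin m) (Fin m) (ZMod 2)} (hM : IsUnit M) : IsUnit (Jmat m * M * Jmat m) :=
    (isUnit_Jmat.mul hM).mul isUnit_Jmat
  constructor
  · rintro ⟨L, U, hL, hLu, hU, hUu, h⟩
    refine ⟨L, Jmat m * U * Jmat m, (isLowerTri_iff L).mpr hL, hLu,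
      (isLowerTri_iff _).mpr ((isUpperTriangular_Jmat_mul_mul_Jmat_iff _).mp (by rwa [hconj])),
      hunit hUu, ?_⟩
    calc B = B * Jmat m * Jmat m := by rw [Matrix.mul_assoc, Jmat_mul_Jmat, Matrix.mul_one]
      _ = L * U * Jmat m := by rw [h]
      _ = L * Jmat m * (Jmat m * U * Jmat m) := by
        simp only [← Matrix.mul_assoc]
        rw [Matrix.mul_assoc L (Jmat m) (Jmat m), Jmat_mul_Jmat, Matrix.mul_one]
  · rintro ⟨L₁, L₂, h₁, hu₁, h₂, hu₂, rfl⟩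
    refine ⟨L₁, Jmat m * L₂ * Jmat m, (isLowerTri_iff L₁).mp h₁, hu₁,
      (isUpperTriangular_Jmat_mul_mul_Jmat_iff L₂).mpr ((isLowerTri_iff L₂).mp h₂), hunit hu₂, ?_⟩
    simp only [Matrix.mul_assoc]

end Antidiagonal

theorem isNet_zero_digitalNet_one_iff {m : ℕ} (B : Matrix (Fin m) (Fin m) (ZMod 2)) :
    IsNet 0 m 2 (digitalNet m 2 ![1, B]) ↔
      ∀ k (hk : k ≤ m), (leadingSubmatrix (B * Jmat m) k hk).det ≠ 0 := by
  simp only [isNet_zero_digitalNet_iff, det_leadingSubmatrix_ne_zero_iff, Fin.forall_fin_two,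
    Fin.sum_univ_two, cons_val_zero, cons_val_one, one_mulVec]
  constructor
  · intro h k hk w hw hBw
    have hJw := h ![m - k, k] (by simp [hk]) (Jmat m *ᵥ w)
      ⟨fun j hj => ?_, fun i hi => by rw [mulVec_mulVec]; exact hBw i (by simpa using hi)⟩
    · rw [← Jmat_mulVec_Jmat_mulVec w, hJw, mulVec_zero]
    · rw [Jmat_mulVec]
      exact hw _ (by simp only [cons_val_zero] at hj; simp only [Fin.val_rev]; omega)
  · rintro h d hd u ⟨hu, hBu⟩
    have hw := h (d 1) (by omega) (Jmat m *ᵥ u)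
      (fun j hj => by rw [Jmat_mulVec]; exact hu _ (by simp only [Fin.val_rev]; omega))
      (fun i hi => by
        rw [mulVec_mulVec, Matrix.mul_assoc, Jmat_mul_Jmat, Matrix.mul_one]; exact hBu i hi)
    rw [← Jmat_mulVec_Jmat_mulVec u, hw, mulVec_zero]

theorem stmt10_general (m : ℕ) (B : Matrix (Fin m) (Fin m) (ZMod 2)) :
    IsNet 0 m 2 (digitalNet m 2 ![1, B]) ↔
      ∃ L₁ L₂ : Matrix (Fin m) (Fin m) (ZMod 2),
        IsLowerTri L₁ ∧ IsUnit L₁ ∧ IsLowerTri L₂ ∧ IsUnit L₂ ∧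
          B = L₁ * Jmat m * L₂ :=
  (isNet_zero_digitalNet_one_iff B).trans <|
    (forall_det_leadingSubmatrix_ne_zero_iff_exists_lower_mul_upper _).trans
      (exists_lower_mul_upper_iff_exists_lower_mul_Jmat_mul_lower B)

theorem stmt10 (m : ℕ) (hm : 1 ≤ m) (B : Matrix (Fin m) (Fin m) (ZMod 2)) :
    IsNet 0 m 2 (digitalNet m 2 ![1, B]) ↔
      ∃ L₁ L₂ : Matrix (Fin m) (Fin m) (ZMod 2),
        IsLowerTri L₁ ∧ IsUnit L₁ ∧ IsLowerTri L₂ ∧ IsUnit L₂ ∧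
          B = L₁ * Jmat m * L₂ :=
  stmt10_general m B
end
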